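/- arXiv:math/0205208 — 2 statements merged into one kernel-verified Lean document; each statement's English description precedes it below -/
import Mathlib

section
/- Let C = {√2·(a,b,c) : (a,b,c) ∈ ℤ³, a+b+c even} be the face-centered cubic lattice normalized so that nearest lattice points are at distance 2. Then the Voronoi cell of the origin, V = {x ∈ ℝ³ : ∀ c ∈ C, ‖x‖ ≤ ‖x − c‖} (a rhombic dodecahedron circumscribing the unit ball), has volume ν₀ = 4√2 = √32. -/
open MeasureTheory Metric Real

private lemma int_self_le_sq (c : ℤ) (hc : 0 ≤ c) : c ≤ c ^ 2 := by
  rcases hc.lt_or_eq with h | h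
  · nlinarith [h]
  · simp [← h]

private lemma aux_int (a b c : ℤ) (hab : b ≤ a) (hbc : c ≤ b) (hc : 0 ≤ c)
    (h : Even (a + b + c)) : 2 * a + c ≤ a ^ 2 + b ^ 2 + c ^ 2 := by
  rcases le_or_gt 2 a with h2 | h2
  · nlinarith [int_self_le_sq c hc,
      mul_nonneg (by linarith : (0:ℤ) ≤ a - 2) (by linarith : (0:ℤ) ≤ a), sq_nonneg b]
  · have hb0 : (0:ℤ) ≤ b := le_trans hc hbc
    have ha0 : (0:ℤ) ≤ a := le_trans hb0 hab
    obtain ⟨k, hk⟩ := h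
    interval_cases a <;> interval_cases b <;> interval_cases c <;> first | decide | omega

private lemma aux_sorted (u v w : ℝ) (a b c : ℤ) (hab : b ≤ a) (hbc : c ≤ b) (hc : 0 ≤ c)
    (he : Even (a + b + c)) (hu : 0 ≤ u) (hv : 0 ≤ v) (hw : 0 ≤ w)
    (h1 : u + v ≤ 1) (h2 : u + w ≤ 1) (h3 : v + w ≤ 1) :
    u * a + v * b + w * c ≤ ((a:ℝ) ^ 2 + (b:ℝ) ^ 2 + (c:ℝ) ^ 2) / 2 := by
  have key := aux_int a b c hab hbc hc he
  have key' : (2 * (a:ℝ) + c) ≤ (a:ℝ) ^ 2 + (b:ℝ) ^ 2 + (c:ℝ) ^ 2 := by exact_mod_cast key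
  have hba : (0:ℝ) ≤ (a:ℝ) - b := by
    have : (b:ℝ) ≤ a := by exact_mod_cast hab
    linarith
  have hcb : (0:ℝ) ≤ (b:ℝ) - c := by
    have : (c:ℝ) ≤ b := by exact_mod_cast hbc
    linarith
  have hc' : (0:ℝ) ≤ (c:ℝ) := by exact_mod_cast hc
  nlinarith [mul_nonneg hcb (by linarith : (0:ℝ) ≤ 1 - (u + v)),
    mul_nonneg hba (by linarith : (0:ℝ) ≤ 1 - u),
    mul_nonneg hc' (by linarith : (0:ℝ) ≤ 3 / 2 - (u + v + w))]

private lemma even_abs3 (a b c : ℤ) (h : Even (a + b + c)) : Even (|a| + |b| + |c|) := by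
  rw [Int.even_iff] at h ⊢
  rcases abs_cases a with ⟨ha, _⟩ | ⟨ha, _⟩ <;> rcases abs_cases b with ⟨hb, _⟩ | ⟨hb, _⟩ <;>
    rcases abs_cases c with ⟨hcc, _⟩ | ⟨hcc, _⟩ <;> rw [ha, hb, hcc] <;> omega

private lemma aux_key' (u v w : ℝ) (a b c : ℤ) (he : Even (a + b + c))
    (hu : 0 ≤ u) (hv : 0 ≤ v) (hw : 0 ≤ w) (ha : 0 ≤ a) (hb : 0 ≤ b) (hc : 0 ≤ c)
    (h1 : u + v ≤ 1) (h2 : u + w ≤ 1) (h3 : v + w ≤ 1) :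
    u * a + v * b + w * c ≤ ((a:ℝ) ^ 2 + (b:ℝ) ^ 2 + (c:ℝ) ^ 2) / 2 := by
  rcases le_total b a with hab | hab <;> rcases le_total c b with hbc | hbc
  · -- a ≥ b ≥ c
    linarith [aux_sorted u v w a b c hab hbc hc he hu hv hw h1 h2 h3]
  · -- b ≤ a, b ≤ c
    rcases le_total c a with hca | hca
    · -- a ≥ c ≥ b
      have he' : Even (a + c + b) := by
        rw [show a + c + b = a + b + c by ring]; exact he
      linarith [aux_sorted u w v a c b hca hbc hb he' hu hw hv (by linarith) (by linarith) (by linarith)]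
    · -- c ≥ a ≥ b
      have he' : Even (c + a + b) := by
        rw [show c + a + b = a + b + c by ring]; exact he
      linarith [aux_sorted w u v c a b hca hab hb he' hw hu hv (by linarith) (by linarith) (by linarith)]
  · -- a ≤ b, c ≤ b, and then compare c a
    rcases le_total c a with hca | hca
    · -- b ≥ a ≥ c
      have he' : Even (b + a + c) := by
        rw [show b + a + c = a + b + c by ring]; exact he
      linarith [aux_sorted v u w b a c hab hca hc he' hv hu hw (by linarith) (by linarith) (by linarith)]
    · -- b ≥ c ≥ a
      have he' : Even (b + c + a) := by
        rw [show b + c + a = a + b + c by ring]; exact he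
      linarith [aux_sorted v w u b c a hbc hca ha he' hv hw hu (by linarith) (by linarith) (by linarith)]
  · -- c ≥ b ≥ a
    have he' : Even (c + b + a) := by
      rw [show c + b + a = a + b + c by ring]; exact he
    linarith [aux_sorted w v u c b a hbc hab ha he' hw hv hu (by linarith) (by linarith) (by linarith)]

private lemma aux_key (y0 y1 y2 : ℝ) (a b c : ℤ) (he : Even (a + b + c))
    (h01 : |y0| + |y1| ≤ 1) (h02 : |y0| + |y2| ≤ 1) (h12 : |y1| + |y2| ≤ 1) :
    y0 * a + y1 * b + y2 * c ≤ ((a:ℝ) ^ 2 + (b:ℝ) ^ 2 + (c:ℝ) ^ 2) / 2 := by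
  have e0 : y0 * a ≤ |y0| * ((|a| : ℤ) : ℝ) := by
    rw [Int.cast_abs, ← abs_mul]; exact le_abs_self _
  have e1 : y1 * b ≤ |y1| * ((|b| : ℤ) : ℝ) := by
    rw [Int.cast_abs, ← abs_mul]; exact le_abs_self _
  have e2 : y2 * c ≤ |y2| * ((|c| : ℤ) : ℝ) := by
    rw [Int.cast_abs, ← abs_mul]; exact le_abs_self _
  have main := aux_key' |y0| |y1| |y2| |a| |b| |c| (even_abs3 a b c he)
    (abs_nonneg _) (abs_nonneg _) (abs_nonneg _) (abs_nonneg _) (abs_nonneg _) (abs_nonneg _)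
    h01 h02 h12
  have ea : (((|a| : ℤ) : ℝ)) ^ 2 = (a:ℝ) ^ 2 := by rw [Int.cast_abs, sq_abs]
  have eb : (((|b| : ℤ) : ℝ)) ^ 2 = (b:ℝ) ^ 2 := by rw [Int.cast_abs, sq_abs]
  have ec : (((|c| : ℤ) : ℝ)) ^ 2 = (c:ℝ) ^ 2 := by rw [Int.cast_abs, sq_abs]
  rw [ea, eb, ec] at main
  linarith

private lemma bridge (x c : EuclideanSpace ℝ (Fin 3)) :
    ‖x‖ ≤ ‖x - c‖ ↔
      2 * (x 0 * c 0 + x 1 * c 1 + x 2 * c 2) ≤ c 0 ^ 2 + c 1 ^ 2 + c 2 ^ 2 := by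
  have hsub : ‖x - c‖ ^ 2 = ‖x‖ ^ 2 - 2 * inner ℝ x c + ‖c‖ ^ 2 := norm_sub_sq_real x c
  have hinner : (inner ℝ x c : ℝ) = x 0 * c 0 + x 1 * c 1 + x 2 * c 2 := by
    simp [PiLp.inner_apply, Fin.sum_univ_three]
    ring
  have hcc : ‖c‖ ^ 2 = c 0 ^ 2 + c 1 ^ 2 + c 2 ^ 2 := by
    rw [← real_inner_self_eq_norm_sq]
    simp only [PiLp.inner_apply, Fin.sum_univ_three, RCLike.inner_apply, conj_trivial]
    ring
  constructor
  · intro h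
    have hsq : ‖x‖ ^ 2 ≤ ‖x - c‖ ^ 2 := pow_le_pow_left₀ (norm_nonneg x) h 2
    rw [hsub, hinner, hcc] at hsq
    linarith
  · intro h
    have hsq : ‖x‖ ^ 2 ≤ ‖x - c‖ ^ 2 := by
      rw [hsub, hinner, hcc]
      linarith
    have := Real.sqrt_le_sqrt hsq
    rwa [Real.sqrt_sq (norm_nonneg _), Real.sqrt_sq (norm_nonneg _)] at this

private lemma aux_key2 (x0 x1 x2 s : ℝ) (hs : 0 < s) (a b c : ℤ)
    (he : Even (a + b + c)) (h01 : |x0| + |x1| ≤ s) (h02 : |x0| + |x2| ≤ s)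
    (h12 : |x1| + |x2| ≤ s) :
    2 * (x0 * (s * a) + x1 * (s * b) + x2 * (s * c)) ≤
      (s * a) ^ 2 + (s * b) ^ 2 + (s * c) ^ 2 := by
  have hdiv : ∀ p q : ℝ, |p| + |q| ≤ s → |p / s| + |q / s| ≤ 1 := by
    intro p q hpq
    rw [abs_div, abs_div, abs_of_pos hs, ← add_div, div_le_one hs]
    exact hpq
  have hk := aux_key (x0 / s) (x1 / s) (x2 / s) a b c he (hdiv _ _ h01) (hdiv _ _ h02)
    (hdiv _ _ h12)
  have hmul := mul_le_mul_of_nonneg_left hk (by positivity : (0:ℝ) ≤ 2 * (s * s))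
  have hs' : s ≠ 0 := ne_of_gt hs
  have e1 : 2 * (s * s) * (x0 / s * a + x1 / s * b + x2 / s * c) =
      2 * (x0 * (s * a) + x1 * (s * b) + x2 * (s * c)) := by
    field_simp
  have e2 : 2 * (s * s) * (((a:ℝ) ^ 2 + (b:ℝ) ^ 2 + (c:ℝ) ^ 2) / 2) =
      (s * a) ^ 2 + (s * b) ^ 2 + (s * c) ^ 2 := by ring
  rw [e1, e2] at hmul
  exact hmul

private lemma veq :
    {x : EuclideanSpace ℝ (Fin 3) |
        ∀ c ∈ {y : EuclideanSpace ℝ (Fin 3) | ∃ a b c : ℤ, Even (a + b + c) ∧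
          y = ![Real.sqrt 2 * a, Real.sqrt 2 * b, Real.sqrt 2 * c]}, ‖x‖ ≤ ‖x - c‖} =
      {x : EuclideanSpace ℝ (Fin 3) | |x 0| + |x 1| ≤ Real.sqrt 2 ∧
        |x 0| + |x 2| ≤ Real.sqrt 2 ∧ |x 1| + |x 2| ≤ Real.sqrt 2} := by
  have hs2 : Real.sqrt 2 * Real.sqrt 2 = 2 := Real.mul_self_sqrt (by norm_num)
  have hs0 : (0:ℝ) < Real.sqrt 2 := Real.sqrt_pos.2 (by norm_num)
  ext x
  simp only [Set.mem_setOf_eq]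
  constructor
  · intro hx
    have key : ∀ a b c : ℤ, Even (a + b + c) →
        2 * (x 0 * (Real.sqrt 2 * a) + x 1 * (Real.sqrt 2 * b) + x 2 * (Real.sqrt 2 * c)) ≤
          (Real.sqrt 2 * a) ^ 2 + (Real.sqrt 2 * b) ^ 2 + (Real.sqrt 2 * c) ^ 2 := by
      intro a b c h
      have h2 := (bridge x _).1 (hx (WithLp.toLp 2 ![Real.sqrt 2 * a, Real.sqrt 2 * b, Real.sqrt 2 * c]) ⟨a, b, c, h, rfl⟩)
      simpa using h2
    have q : ∀ a b c : ℤ, Even (a + b + c) →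
        Real.sqrt 2 * (x 0 * a + x 1 * b + x 2 * c) ≤ ((a:ℝ) ^ 2 + (b:ℝ) ^ 2 + (c:ℝ) ^ 2) := by
      intro a b c h
      have hk := key a b c h
      nlinarith [hk, hs2, hs0]
    have half : ∀ t : ℝ, Real.sqrt 2 * t ≤ 2 → t ≤ Real.sqrt 2 := by
      intro t ht
      nlinarith [hs2, hs0]
    refine ⟨?_, ?_, ?_⟩
    · have a1 := q 1 1 0 ⟨1, by ring⟩
      have a2 := q 1 (-1) 0 ⟨0, by ring⟩
      have a3 := q (-1) 1 0 ⟨0, by ring⟩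
      have a4 := q (-1) (-1) 0 ⟨-1, by ring⟩
      norm_num at a1 a2 a3 a4
      rcases abs_cases (x 0) with ⟨e0, _⟩ | ⟨e0, _⟩ <;>
        rcases abs_cases (x 1) with ⟨e1, _⟩ | ⟨e1, _⟩ <;> rw [e0, e1]
      · exact half _ (by linarith)
      · exact half _ (by linarith)
      · exact half _ (by linarith)
      · exact half _ (by linarith)
    · have a1 := q 1 0 1 ⟨1, by ring⟩
      have a2 := q 1 0 (-1) ⟨0, by ring⟩
      have a3 := q (-1) 0 1 ⟨0, by ring⟩
      have a4 := q (-1) 0 (-1) ⟨-1, by ring⟩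
      norm_num at a1 a2 a3 a4
      rcases abs_cases (x 0) with ⟨e0, _⟩ | ⟨e0, _⟩ <;>
        rcases abs_cases (x 2) with ⟨e1, _⟩ | ⟨e1, _⟩ <;> rw [e0, e1]
      · exact half _ (by linarith)
      · exact half _ (by linarith)
      · exact half _ (by linarith)
      · exact half _ (by linarith)
    · have a1 := q 0 1 1 ⟨1, by ring⟩
      have a2 := q 0 1 (-1) ⟨0, by ring⟩
      have a3 := q 0 (-1) 1 ⟨0, by ring⟩
      have a4 := q 0 (-1) (-1) ⟨-1, by ring⟩
      norm_num at a1 a2 a3 a4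
      rcases abs_cases (x 1) with ⟨e0, _⟩ | ⟨e0, _⟩ <;>
        rcases abs_cases (x 2) with ⟨e1, _⟩ | ⟨e1, _⟩ <;> rw [e0, e1]
      · exact half _ (by linarith)
      · exact half _ (by linarith)
      · exact half _ (by linarith)
      · exact half _ (by linarith)
  · rintro ⟨h01, h02, h12⟩ c ⟨a, b, cc, he, hc⟩
    rw [bridge, hc]
    have := aux_key2 (x 0) (x 1) (x 2) (Real.sqrt 2) hs0 a b cc he h01 h02 h12
    simpa using this

/-- The continuous cross-section-area function. -/
private noncomputable def Bfun (s x : ℝ) : ℝ :=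
  2 * s ^ 2 - 4 * x ^ 2 + 2 * max 0 (2 * |x| - s) ^ 2

private lemma Bfun_cont (s : ℝ) : Continuous (Bfun s) := by
  unfold Bfun
  fun_prop

private lemma integ_poly (a b c0 c1 c2 : ℝ) :
    ∫ y in a..b, (c0 + c1 * y + c2 * y ^ 2) =
      c0 * (b - a) + c1 * (b ^ 2 - a ^ 2) / 2 + c2 * (b ^ 3 - a ^ 3) / 3 := by
  have h0 : IntervalIntegrable (fun _ : ℝ => c0) volume a b := intervalIntegrable_const
  have h1 : IntervalIntegrable (fun y : ℝ => c1 * y) volume a b :=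
    (continuous_const.mul continuous_id).intervalIntegrable _ _
  have h2 : IntervalIntegrable (fun y : ℝ => c2 * y ^ 2) volume a b :=
    (continuous_const.mul (continuous_pow 2)).intervalIntegrable _ _
  rw [intervalIntegral.integral_add (h0.add h1) h2, intervalIntegral.integral_add h0 h1,
    intervalIntegral.integral_const, intervalIntegral.integral_const_mul,
    intervalIntegral.integral_const_mul, integral_id, integral_pow]
  push_cast
  rw [smul_eq_mul]
  ring

private lemma inner_slice (s x y : ℝ) :
    volume {z : ℝ | |x| + |y| ≤ s ∧ |x| + |z| ≤ s ∧ |y| + |z| ≤ s} =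
      ENNReal.ofReal (if |x| + |y| ≤ s then 2 * (s - max |x| |y|) else 0) := by
  by_cases h : |x| + |y| ≤ s
  · rw [if_pos h]
    have hset : {z : ℝ | |x| + |y| ≤ s ∧ |x| + |z| ≤ s ∧ |y| + |z| ≤ s}
        = Set.Icc (-(s - max |x| |y|)) (s - max |x| |y|) := by
      ext z
      simp only [Set.mem_setOf_eq, Set.mem_Icc, ← abs_le]
      constructor
      · rintro ⟨-, h2, h3⟩
        rcases max_cases |x| |y| with ⟨hm, _⟩ | ⟨hm, _⟩ <;> rw [hm] <;> linarith
      · intro hz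
        have hx := le_max_left |x| |y|
        have hy := le_max_right |x| |y|
        exact ⟨h, by linarith, by linarith⟩
    rw [hset, Real.volume_Icc]
    congr 1
    ring
  · rw [if_neg h]
    have hset : {z : ℝ | |x| + |y| ≤ s ∧ |x| + |z| ≤ s ∧ |y| + |z| ≤ s} = ∅ := by
      ext z
      simp only [Set.mem_setOf_eq, Set.mem_empty_iff_false, iff_false, not_and]
      intro h1
      exact absurd h1 h
    simp [hset]

private lemma mid_integral (s x : ℝ) (hs : 0 < s) :
    (∫⁻ y, ENNReal.ofReal (if |x| + |y| ≤ s then 2 * (s - max |x| |y|) else 0)) =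
      ENNReal.ofReal (if |x| ≤ s then Bfun s x else 0) := by
  by_cases hx : |x| ≤ s
  · rw [if_pos hx]
    set a := |x| with ha_def
    have ha : 0 ≤ a := abs_nonneg x
    set f : ℝ → ℝ := Set.indicator (Set.Icc (-(s - a)) (s - a)) (fun y => 2 * (s - max a |y|))
      with hf_def
    have hfe : ∀ y, (if |x| + |y| ≤ s then 2 * (s - max |x| |y|) else 0) = f y := by
      intro y
      by_cases hy : |y| ≤ s - a
      · rw [if_pos (by linarith), hf_def,
          Set.indicator_of_mem (by rw [Set.mem_Icc, ← abs_le]; exact hy)]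
      · rw [if_neg (by push_neg at hy ⊢; linarith), hf_def,
          Set.indicator_of_notMem (by rw [Set.mem_Icc, ← abs_le]; exact hy)]
    rw [lintegral_congr fun y => by rw [hfe y]]
    have hcont : Continuous fun y : ℝ => 2 * (s - max a |y|) := by fun_prop
    have hint : Integrable f := by
      rw [hf_def, integrable_indicator_iff measurableSet_Icc]
      exact hcont.integrableOn_Icc
    have hnn : 0 ≤ᵐ[volume] f := by
      refine Filter.Eventually.of_forall fun y => ?_
      rw [hf_def]
      apply Set.indicator_nonneg
      intro y hy
      rw [Set.mem_Icc, ← abs_le] at hy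
      rcases max_cases a |y| with ⟨hm, _⟩ | ⟨hm, _⟩ <;> rw [hm] <;> linarith
    rw [← ofReal_integral_eq_lintegral_ofReal hint hnn]
    congr 1
    rw [hf_def, MeasureTheory.integral_indicator measurableSet_Icc,
      MeasureTheory.integral_Icc_eq_integral_Ioc,
      ← intervalIntegral.integral_of_le (by linarith : -(s - a) ≤ s - a)]
    by_cases h2 : a ≤ s - a
    · -- a ≤ s/2 : split at -a and a
      have i1 : IntervalIntegrable (fun y : ℝ => 2 * (s - max a |y|)) volume (-(s - a)) (-a) :=
        hcont.intervalIntegrable _ _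
      have i2 : IntervalIntegrable (fun y : ℝ => 2 * (s - max a |y|)) volume (-a) a :=
        hcont.intervalIntegrable _ _
      have i3 : IntervalIntegrable (fun y : ℝ => 2 * (s - max a |y|)) volume a (s - a) :=
        hcont.intervalIntegrable _ _
      rw [← intervalIntegral.integral_add_adjacent_intervals (i1.trans i2) i3,
        ← intervalIntegral.integral_add_adjacent_intervals i1 i2]
      have p1 : (∫ y in (-(s - a))..(-a), 2 * (s - max a |y|)) =
          ∫ y in (-(s - a))..(-a), (2 * s + 2 * y + 0 * y ^ 2) := by
        apply intervalIntegral.integral_congr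
        intro y hy
        rw [Set.uIcc_of_le (by linarith)] at hy
        obtain ⟨hy1, hy2⟩ := hy
        beta_reduce
        rw [abs_of_nonpos (by linarith), max_eq_right (by linarith)]
        ring
      have p2 : (∫ y in (-a)..a, 2 * (s - max a |y|)) =
          ∫ y in (-a)..a, (2 * (s - a) + 0 * y + 0 * y ^ 2) := by
        apply intervalIntegral.integral_congr
        intro y hy
        rw [Set.uIcc_of_le (by linarith)] at hy
        obtain ⟨hy1, hy2⟩ := hy
        beta_reduce
        rw [max_eq_left (abs_le.2 ⟨hy1, hy2⟩)]
        ring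
      have p3 : (∫ y in a..(s - a), 2 * (s - max a |y|)) =
          ∫ y in a..(s - a), (2 * s + (-2) * y + 0 * y ^ 2) := by
        apply intervalIntegral.integral_congr
        intro y hy
        rw [Set.uIcc_of_le (by linarith)] at hy
        obtain ⟨hy1, hy2⟩ := hy
        beta_reduce
        rw [abs_of_nonneg (by linarith), max_eq_right (by linarith)]
        ring
      rw [p1, p2, p3, integ_poly, integ_poly, integ_poly]
      unfold Bfun
      rw [show max 0 (2 * |x| - s) = 0 from max_eq_left (by rw [← ha_def]; linarith),
        ← sq_abs x, ← ha_def]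
      ring
    · -- s/2 < a ≤ s : the integrand is constant
      push_neg at h2
      have p : (∫ y in (-(s - a))..(s - a), 2 * (s - max a |y|)) =
          ∫ y in (-(s - a))..(s - a), (2 * (s - a) + 0 * y + 0 * y ^ 2) := by
        apply intervalIntegral.integral_congr
        intro y hy
        rw [Set.uIcc_of_le (by linarith)] at hy
        obtain ⟨hy1, hy2⟩ := hy
        beta_reduce
        rw [max_eq_left (by rw [abs_le]; constructor <;> linarith)]
        ring
      rw [p, integ_poly]
      unfold Bfun
      rw [show max 0 (2 * |x| - s) = 2 * |x| - s from max_eq_right (by rw [← ha_def]; linarith),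
        ← sq_abs x, ← ha_def]
      ring
  · rw [if_neg hx]
    push_neg at hx
    have : ∀ y : ℝ, (if |x| + |y| ≤ s then 2 * (s - max |x| |y|) else 0) = 0 := by
      intro y
      rw [if_neg]
      push_neg
      have := abs_nonneg y
      linarith
    simp [this]

private lemma outer_integral (s : ℝ) (hs : 0 < s) :
    (∫⁻ x, ENNReal.ofReal (if |x| ≤ s then Bfun s x else 0)) = ENNReal.ofReal (2 * s ^ 3) := by
  have hB := Bfun_cont s
  have heq : ∀ x : ℝ, (if |x| ≤ s then Bfun s x else 0) =
      Set.indicator (Set.Icc (-s) s) (Bfun s) x := by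
    intro x
    by_cases hx : |x| ≤ s
    · rw [if_pos hx, Set.indicator_of_mem (by rw [Set.mem_Icc, ← abs_le]; exact hx)]
    · rw [if_neg hx, Set.indicator_of_notMem (by rw [Set.mem_Icc, ← abs_le]; exact hx)]
  rw [lintegral_congr fun x => by rw [heq x]]
  have hint : Integrable (Set.indicator (Set.Icc (-s) s) (Bfun s)) :=
    (integrable_indicator_iff measurableSet_Icc).2 hB.integrableOn_Icc
  have hnn : 0 ≤ᵐ[volume] Set.indicator (Set.Icc (-s) s) (Bfun s) := by
    refine Filter.Eventually.of_forall fun x => ?_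
    apply Set.indicator_nonneg
    intro x hx
    rw [Set.mem_Icc, ← abs_le] at hx
    unfold Bfun
    rcases max_cases 0 (2 * |x| - s) with ⟨hm, hm'⟩ | ⟨hm, hm'⟩ <;> rw [hm]
    · nlinarith [sq_abs x, abs_nonneg x,
        mul_nonneg (by linarith : (0:ℝ) ≤ s - 2 * |x|)
          (by linarith [abs_nonneg x] : (0:ℝ) ≤ s + 2 * |x|)]
    · nlinarith [sq_abs x, sq_nonneg (2 * s - 2 * |x|)]
  rw [← ofReal_integral_eq_lintegral_ofReal hint hnn]
  congr 1
  rw [MeasureTheory.integral_indicator measurableSet_Icc,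
    MeasureTheory.integral_Icc_eq_integral_Ioc,
    ← intervalIntegral.integral_of_le (by linarith : -s ≤ s)]
  have i1 : IntervalIntegrable (Bfun s) volume (-s) (-(s / 2)) := hB.intervalIntegrable _ _
  have i2 : IntervalIntegrable (Bfun s) volume (-(s / 2)) (s / 2) := hB.intervalIntegrable _ _
  have i3 : IntervalIntegrable (Bfun s) volume (s / 2) s := hB.intervalIntegrable _ _
  rw [← intervalIntegral.integral_add_adjacent_intervals (i1.trans i2) i3,
    ← intervalIntegral.integral_add_adjacent_intervals i1 i2]
  have q1 : (∫ x in (-s)..(-(s / 2)), Bfun s x) =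
      ∫ x in (-s)..(-(s / 2)), (4 * s ^ 2 + (8 * s) * x + 4 * x ^ 2) := by
    apply intervalIntegral.integral_congr
    intro x hx
    rw [Set.uIcc_of_le (by linarith)] at hx
    obtain ⟨hx1, hx2⟩ := hx
    beta_reduce
    unfold Bfun
    rw [abs_of_nonpos (by linarith), max_eq_right (by linarith)]
    ring
  have q2 : (∫ x in (-(s / 2))..(s / 2), Bfun s x) =
      ∫ x in (-(s / 2))..(s / 2), (2 * s ^ 2 + 0 * x + (-4) * x ^ 2) := by
    apply intervalIntegral.integral_congr
    intro x hx
    rw [Set.uIcc_of_le (by linarith)] at hx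
    obtain ⟨hx1, hx2⟩ := hx
    have hxs : |x| ≤ s / 2 := abs_le.2 ⟨by linarith, hx2⟩
    beta_reduce
    unfold Bfun
    rw [max_eq_left (by linarith)]
    ring
  have q3 : (∫ x in (s / 2)..s, Bfun s x) =
      ∫ x in (s / 2)..s, (4 * s ^ 2 + (-(8 * s)) * x + 4 * x ^ 2) := by
    apply intervalIntegral.integral_congr
    intro x hx
    rw [Set.uIcc_of_le (by linarith)] at hx
    obtain ⟨hx1, hx2⟩ := hx
    beta_reduce
    unfold Bfun
    rw [abs_of_nonneg (by linarith), max_eq_right (by linarith)]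
    ring
  rw [q1, q2, q3, integ_poly, integ_poly, integ_poly]
  ring

private lemma vol_prod (s : ℝ) (hs : 0 < s) :
    volume {p : ℝ × ℝ × ℝ | |p.1| + |p.2.1| ≤ s ∧ |p.1| + |p.2.2| ≤ s ∧ |p.2.1| + |p.2.2| ≤ s}
      = ENNReal.ofReal (2 * s ^ 3) := by
  have hmeas : MeasurableSet {p : ℝ × ℝ × ℝ |
      |p.1| + |p.2.1| ≤ s ∧ |p.1| + |p.2.2| ≤ s ∧ |p.2.1| + |p.2.2| ≤ s} := by
    apply IsClosed.measurableSet
    have c1 : Continuous fun p : ℝ × ℝ × ℝ => |p.1| + |p.2.1| :=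
      continuous_fst.abs.add (continuous_fst.comp continuous_snd).abs
    have c2 : Continuous fun p : ℝ × ℝ × ℝ => |p.1| + |p.2.2| :=
      continuous_fst.abs.add (continuous_snd.comp continuous_snd).abs
    have c3 : Continuous fun p : ℝ × ℝ × ℝ => |p.2.1| + |p.2.2| :=
      (continuous_fst.comp continuous_snd).abs.add (continuous_snd.comp continuous_snd).abs
    exact (isClosed_le c1 continuous_const).inter
      ((isClosed_le c2 continuous_const).inter (isClosed_le c3 continuous_const))
  have hmeas2 : ∀ x : ℝ, MeasurableSet {q : ℝ × ℝ |
      |x| + |q.1| ≤ s ∧ |x| + |q.2| ≤ s ∧ |q.1| + |q.2| ≤ s} := by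
    intro x
    apply IsClosed.measurableSet
    have c1 : Continuous fun q : ℝ × ℝ => |x| + |q.1| :=
      continuous_const.add continuous_fst.abs
    have c2 : Continuous fun q : ℝ × ℝ => |x| + |q.2| :=
      continuous_const.add continuous_snd.abs
    have c3 : Continuous fun q : ℝ × ℝ => |q.1| + |q.2| :=
      continuous_fst.abs.add continuous_snd.abs
    exact (isClosed_le c1 continuous_const).inter
      ((isClosed_le c2 continuous_const).inter (isClosed_le c3 continuous_const))
  rw [Measure.volume_eq_prod, Measure.prod_apply hmeas]
  calc
    (∫⁻ x, (volume : Measure (ℝ × ℝ)) (Prod.mk x ⁻¹' _)) =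
        ∫⁻ x, ∫⁻ y, volume {z : ℝ | |x| + |y| ≤ s ∧ |x| + |z| ≤ s ∧ |y| + |z| ≤ s} := by
      refine lintegral_congr fun x => ?_
      rw [show (Prod.mk x ⁻¹'
          {p : ℝ × ℝ × ℝ | |p.1| + |p.2.1| ≤ s ∧ |p.1| + |p.2.2| ≤ s ∧ |p.2.1| + |p.2.2| ≤ s}) =
          {q : ℝ × ℝ | |x| + |q.1| ≤ s ∧ |x| + |q.2| ≤ s ∧ |q.1| + |q.2| ≤ s} from rfl,
        Measure.volume_eq_prod, Measure.prod_apply (hmeas2 x)]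
      rfl
    _ = ∫⁻ x, ENNReal.ofReal (if |x| ≤ s then Bfun s x else 0) := by
      refine lintegral_congr fun x => ?_
      rw [lintegral_congr fun y => inner_slice s x y]
      exact mid_integral s x hs
    _ = ENNReal.ofReal (2 * s ^ 3) := outer_integral s hs

private lemma vol_pi (s : ℝ) (hs : 0 < s) :
    volume {x : Fin 3 → ℝ | |x 0| + |x 1| ≤ s ∧ |x 0| + |x 2| ≤ s ∧ |x 1| + |x 2| ≤ s}
      = ENNReal.ofReal (2 * s ^ 3) := by
  have m1 : MeasurePreserving (MeasurableEquiv.piFinSuccAbove (fun _ : Fin 3 => ℝ) 0) :=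
    volume_preserving_piFinSuccAbove (fun _ : Fin 3 => ℝ) 0
  have m2 : MeasurePreserving (MeasurableEquiv.piFinSuccAbove (fun _ : Fin 2 => ℝ) 0) :=
    volume_preserving_piFinSuccAbove (fun _ : Fin 2 => ℝ) 0
  have m3 : MeasurePreserving (MeasurableEquiv.funUnique (Fin 1) ℝ) :=
    volume_preserving_funUnique (Fin 1) ℝ
  have mF : MeasurePreserving
      ((Prod.map (id : ℝ → ℝ)
          ((Prod.map (id : ℝ → ℝ) (MeasurableEquiv.funUnique (Fin 1) ℝ)) ∘
            (MeasurableEquiv.piFinSuccAbove (fun _ : Fin 2 => ℝ) 0))) ∘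
        (MeasurableEquiv.piFinSuccAbove (fun _ : Fin 3 => ℝ) 0))
      (volume : Measure (Fin 3 → ℝ)) (volume : Measure (ℝ × ℝ × ℝ)) :=
    ((MeasurePreserving.id volume).prod
      (((MeasurePreserving.id volume).prod m3).comp m2)).comp m1
  have hmeas : MeasurableSet {p : ℝ × ℝ × ℝ |
      |p.1| + |p.2.1| ≤ s ∧ |p.1| + |p.2.2| ≤ s ∧ |p.2.1| + |p.2.2| ≤ s} := by
    apply IsClosed.measurableSet
    have c1 : Continuous fun p : ℝ × ℝ × ℝ => |p.1| + |p.2.1| :=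
      continuous_fst.abs.add (continuous_fst.comp continuous_snd).abs
    have c2 : Continuous fun p : ℝ × ℝ × ℝ => |p.1| + |p.2.2| :=
      continuous_fst.abs.add (continuous_snd.comp continuous_snd).abs
    have c3 : Continuous fun p : ℝ × ℝ × ℝ => |p.2.1| + |p.2.2| :=
      (continuous_fst.comp continuous_snd).abs.add (continuous_snd.comp continuous_snd).abs
    exact (isClosed_le c1 continuous_const).inter
      ((isClosed_le c2 continuous_const).inter (isClosed_le c3 continuous_const))
  have hpre : {x : Fin 3 → ℝ | |x 0| + |x 1| ≤ s ∧ |x 0| + |x 2| ≤ s ∧ |x 1| + |x 2| ≤ s} =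
      ((Prod.map (id : ℝ → ℝ)
          ((Prod.map (id : ℝ → ℝ) (MeasurableEquiv.funUnique (Fin 1) ℝ)) ∘
            (MeasurableEquiv.piFinSuccAbove (fun _ : Fin 2 => ℝ) 0))) ∘
        (MeasurableEquiv.piFinSuccAbove (fun _ : Fin 3 => ℝ) 0)) ⁻¹'
      {p : ℝ × ℝ × ℝ | |p.1| + |p.2.1| ≤ s ∧ |p.1| + |p.2.2| ≤ s ∧ |p.2.1| + |p.2.2| ≤ s} :=
    rfl
  rw [hpre, mF.measure_preimage hmeas.nullMeasurableSet]
  exact vol_prod s hs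

/-- For the face-centered cubic lattice
`C = {√2·(a,b,c) : (a,b,c) ∈ ℤ³, a+b+c even}` (nearest lattice points at
distance 2), the Voronoi cell of the origin
`V = {x : ∀ c ∈ C, ‖x‖ ≤ ‖x − c‖}` — a rhombic dodecahedron circumscribing the
unit ball — has volume `ν₀ = 4√2 = √32`. -/
theorem fcc_voronoi_cell_volume :
    let C : Set (EuclideanSpace ℝ (Fin 3)) :=
      {x | ∃ a b c : ℤ, Even (a + b + c) ∧
        x = ![Real.sqrt 2 * a, Real.sqrt 2 * b, Real.sqrt 2 * c]}
    volume {x : EuclideanSpace ℝ (Fin 3) | ∀ c ∈ C, ‖x‖ ≤ ‖x - c‖}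
      = ENNReal.ofReal (4 * Real.sqrt 2) := by
  intro C
  have hs0 : (0:ℝ) < Real.sqrt 2 := Real.sqrt_pos.2 (by norm_num)
  have h1 : {x : EuclideanSpace ℝ (Fin 3) | ∀ c ∈ C, ‖x‖ ≤ ‖x - c‖} =
      {x : EuclideanSpace ℝ (Fin 3) | |x 0| + |x 1| ≤ Real.sqrt 2 ∧
        |x 0| + |x 2| ≤ Real.sqrt 2 ∧ |x 1| + |x 2| ≤ Real.sqrt 2} := veq
  rw [h1]
  have h2 : {x : EuclideanSpace ℝ (Fin 3) | |x 0| + |x 1| ≤ Real.sqrt 2 ∧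
      |x 0| + |x 2| ≤ Real.sqrt 2 ∧ |x 1| + |x 2| ≤ Real.sqrt 2} =
      (MeasurableEquiv.toLp 2 (Fin 3 → ℝ)).symm ⁻¹'
        {x : Fin 3 → ℝ | |x 0| + |x 1| ≤ Real.sqrt 2 ∧
          |x 0| + |x 2| ≤ Real.sqrt 2 ∧ |x 1| + |x 2| ≤ Real.sqrt 2} := rfl
  rw [h2, (EuclideanSpace.volume_preserving_symm_measurableEquiv_toLp (Fin 3)).measure_preimage_equiv,
    vol_pi (Real.sqrt 2) hs0]
  congr 1
  have h3 : Real.sqrt 2 ^ 3 = 2 * Real.sqrt 2 := by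
    rw [pow_succ, Real.sq_sqrt (by norm_num : (0:ℝ) ≤ 2)]
  rw [h3]
  ring
end

section
/- Let C ⊆ ℝ³ be a saturated packing of unit balls (pairwise distances between centers are ≥ 2, and every point of ℝ³ is within distance 2 of some center), and let v > 0. If the Voronoi cell of every center c ∈ C has volume at least v, then the upper density of the packing is at most (4π/3)/v. In particular, if every Voronoi cell has volume at least ν₀ = 4√2, the volume of the rhombic dodecahedron, then the upper density is at most π/√18. -/
open MeasureTheory Metric Filter Real

private lemma vol_unit_ball3 :
    volume (ball (0 : EuclideanSpace ℝ (Fin 3)) 1) = ENNReal.ofReal (4 * π / 3) := by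
  rw [EuclideanSpace.volume_ball]
  have hπ : (0:ℝ) < √π := Real.sqrt_pos.mpr Real.pi_pos
  have hg : Real.Gamma ((Fintype.card (Fin 3) : ℝ) / 2 + 1) = 3 / 4 * √π := by
    have h32 : ((Fintype.card (Fin 3) : ℝ)) / 2 = 1 / 2 + 1 := by
      simp [Fintype.card_fin]; norm_num
    rw [h32, Real.Gamma_add_one (by norm_num), Real.Gamma_add_one (by norm_num),
      Real.Gamma_one_half_eq]
    ring
  rw [hg]
  have hs : √π ^ Fintype.card (Fin 3) = π * √π := by
    simp only [Fintype.card_fin]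
    rw [pow_succ, sq_sqrt Real.pi_pos.le]
  rw [hs]
  have : π * √π / (3 / 4 * √π) = 4 * π / 3 := by
    field_simp
  rw [this]
  simp

/-- Let `C` be a saturated packing of unit balls in ℝ³ (pairwise distances
between centers ≥ 2, every point of ℝ³ within distance 2 of some center), and
let `v > 0`. If the Voronoi cell of every center has volume at least `v`, then
the upper density of the packing is at most `(4π/3)/v`. -/
theorem voronoi_volume_bound_implies_density_bound
    (C : Set (EuclideanSpace ℝ (Fin 3)))
    (hC : C.Pairwise fun x y => 2 ≤ dist x y)
    (hsat : ∀ x : EuclideanSpace ℝ (Fin 3), ∃ c ∈ C, dist x c ≤ 2)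
    (v : ℝ) (hv : 0 < v)
    (hvor : ∀ c ∈ C,
      ENNReal.ofReal v ≤
        volume {x : EuclideanSpace ℝ (Fin 3) | ∀ c' ∈ C, ‖x - c‖ ≤ ‖x - c'‖}) :
    limsup (fun R : ℝ =>
        volume ((⋃ c ∈ C, ball c 1) ∩ ball (0 : EuclideanSpace ℝ (Fin 3)) R) /
          volume (ball (0 : EuclideanSpace ℝ (Fin 3)) R)) atTop
      ≤ ENNReal.ofReal ((4 * π / 3) / v) := by
  set Vor : EuclideanSpace ℝ (Fin 3) → Set (EuclideanSpace ℝ (Fin 3)) :=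
    fun c => {x | ∀ c' ∈ C, ‖x - c‖ ≤ ‖x - c'‖} with hVordef
  set κ : ENNReal := volume (ball (0 : EuclideanSpace ℝ (Fin 3)) 1) with hκdef
  have hκ : κ = ENNReal.ofReal (4 * π / 3) := vol_unit_ball3
  have hfin : Module.finrank ℝ (EuclideanSpace ℝ (Fin 3)) = 3 := by
    simp [finrank_euclideanSpace]
  -- countability of C
  have hCc : C.Countable := by
    refine Set.PairwiseDisjoint.countable_of_isOpen (s := fun c => ball c 1)
      ?_ (fun c _ => isOpen_ball) (fun c _ => ⟨c, mem_ball_self one_pos⟩)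
    intro x hx y hy hxy
    exact ball_disjoint_ball (by have := hC hx hy hxy; linarith)
  -- Voronoi cells are closed
  have hVorClosed : ∀ c : EuclideanSpace ℝ (Fin 3), IsClosed (Vor c) := by
    intro c
    have : Vor c = ⋂ c' ∈ C, {x | ‖x - c‖ ≤ ‖x - c'‖} := by
      ext x; simp [Vor]
    rw [this]
    exact isClosed_biInter fun c' _ =>
      isClosed_le ((continuous_id.sub continuous_const).norm)
        ((continuous_id.sub continuous_const).norm)
  -- Voronoi cells are a.e. disjoint
  have hae : ∀ c ∈ C, ∀ c' ∈ C, c ≠ c' → volume (Vor c ∩ Vor c') = 0 := by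
    intro c hc c' hc' hne
    refine measure_mono_null (t := (AffineSubspace.perpBisector c c' : Set (EuclideanSpace ℝ (Fin 3)))) ?_ ?_
    · rintro x ⟨h1, h2⟩
      rw [SetLike.mem_coe, AffineSubspace.mem_perpBisector_iff_dist_eq,
        dist_eq_norm, dist_eq_norm]
      exact le_antisymm (h1 c' hc') (h2 c hc)
    · exact Measure.addHaar_affineSubspace _ _
        (fun h => hne (AffineSubspace.perpBisector_eq_top.mp h))
  -- Voronoi cells are within distance 2 of their centers
  have hVorSub : ∀ c, Vor c ⊆ closedBall c 2 := by
    intro c x hx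
    obtain ⟨c'', hc'', h2⟩ := hsat x
    rw [mem_closedBall, dist_eq_norm]
    calc ‖x - c‖ ≤ ‖x - c''‖ := hx c'' hc''
      _ ≤ 2 := by rwa [← dist_eq_norm]
  -- the main pointwise bound
  have hbound : ∀ R : ℝ, 1 ≤ R →
      volume ((⋃ c ∈ C, ball c 1) ∩ ball (0 : EuclideanSpace ℝ (Fin 3)) R) / volume (ball (0 : EuclideanSpace ℝ (Fin 3)) R)
        ≤ ENNReal.ofReal ((4 * π / 3) / v * ((R + 3) / R) ^ 3) := by
    intro R hR
    have hR0 : (0:ℝ) < R := by linarith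
    set S : Set (EuclideanSpace ℝ (Fin 3)) := C ∩ closedBall 0 (R + 1) with hSdef
    have hSc : S.Countable := hCc.mono Set.inter_subset_left
    set N : ENNReal := volume ((⋃ c ∈ C, ball c 1) ∩ ball (0 : EuclideanSpace ℝ (Fin 3)) R) with hNdef
    set D : ENNReal := volume (ball (0 : EuclideanSpace ℝ (Fin 3)) R) with hDdef
    have hD : D = ENNReal.ofReal (R ^ 3) * κ := by
      rw [hDdef, Measure.addHaar_ball volume 0 hR0.le, hfin]
    -- numerator bound
    have hsub : (⋃ c ∈ C, ball c 1) ∩ ball (0 : EuclideanSpace ℝ (Fin 3)) R ⊆ ⋃ c ∈ S, ball c 1 := by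
      rintro x ⟨hx1, hx2⟩
      simp only [Set.mem_iUnion, exists_prop] at hx1 ⊢
      obtain ⟨c, hc, hxc⟩ := hx1
      refine ⟨c, ⟨hc, ?_⟩, hxc⟩
      rw [mem_closedBall]
      have h1 : dist c 0 ≤ dist c x + dist x 0 := dist_triangle _ _ _
      have h2 : dist c x < 1 := by rwa [dist_comm, ← mem_ball]
      have h3 : dist x 0 < R := by rwa [← mem_ball]
      linarith
    have hball : ∀ c : EuclideanSpace ℝ (Fin 3), volume (ball c 1) = κ := fun c => by
      rw [Measure.addHaar_ball_center]
    have hnum : N ≤ ∑' _ : S, κ := by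
      refine le_trans (measure_mono hsub) (le_trans (measure_biUnion_le volume hSc _) ?_)
      exact le_of_eq (tsum_congr fun c => hball c)
    -- Voronoi cells of centers in S fill a big ball
    have hVsum : (∑' _ : S, ENNReal.ofReal v) ≤ volume (closedBall (0 : EuclideanSpace ℝ (Fin 3)) (R + 3)) := by
      have hdisj : S.Pairwise (Function.onFun (MeasureTheory.AEDisjoint volume) Vor) := by
        intro c hc c' hc' hne
        exact hae c hc.1 c' hc'.1 hne
      calc (∑' _ : S, ENNReal.ofReal v)
          ≤ ∑' c : S, volume (Vor c) :=
            ENNReal.tsum_le_tsum fun c => hvor c c.2.1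
        _ = volume (⋃ c ∈ S, Vor c) :=
            (measure_biUnion₀ hSc hdisj fun c _ =>
              (hVorClosed c).measurableSet.nullMeasurableSet).symm
        _ ≤ volume (closedBall (0 : EuclideanSpace ℝ (Fin 3)) (R + 3)) := by
            refine measure_mono ?_
            rintro x hx
            simp only [Set.mem_iUnion, exists_prop] at hx
            obtain ⟨c, hcS, hxc⟩ := hx
            have h1 : dist x c ≤ 2 := hVorSub c hxc
            have h2 : dist c 0 ≤ R + 1 := hcS.2
            rw [mem_closedBall]
            calc dist x 0 ≤ dist x c + dist c 0 := dist_triangle _ _ _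
              _ ≤ R + 3 := by linarith
    have hCB : volume (closedBall (0 : EuclideanSpace ℝ (Fin 3)) (R + 3)) = ENNReal.ofReal ((R + 3) ^ 3) * κ := by
      rw [Measure.addHaar_closedBall volume 0 (by linarith), hfin]
    -- key multiplicative inequality
    have key : N * ENNReal.ofReal v ≤ κ * (ENNReal.ofReal ((R + 3) ^ 3) * κ) := by
      calc N * ENNReal.ofReal v
          ≤ (∑' _ : S, κ) * ENNReal.ofReal v := mul_le_mul_left hnum _
        _ = ∑' _ : S, κ * ENNReal.ofReal v := ENNReal.tsum_mul_right.symm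
        _ = κ * ∑' _ : S, ENNReal.ofReal v := ENNReal.tsum_mul_left
        _ ≤ κ * (ENNReal.ofReal ((R + 3) ^ 3) * κ) := by
            rw [← hCB]; exact mul_le_mul_right hVsum _
    set B : ℝ := (4 * π / 3) / v * ((R + 3) / R) ^ 3 with hBdef
    have hB : 0 ≤ B := by
      refine mul_nonneg (div_nonneg (by positivity) hv.le) ?_
      exact pow_nonneg (div_nonneg (by linarith) hR0.le) 3
    -- ENNReal arithmetic: ofReal B * D * ofReal v = κ * (ofReal ((R+3)^3) * κ)
    have hveq : ENNReal.ofReal B * D * ENNReal.ofReal v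
        = κ * (ENNReal.ofReal ((R + 3) ^ 3) * κ) := by
      rw [hD, hκ]
      have l1 : ENNReal.ofReal B * (ENNReal.ofReal (R ^ 3) * ENNReal.ofReal (4 * π / 3))
          * ENNReal.ofReal v = ENNReal.ofReal (B * (R ^ 3 * (4 * π / 3)) * v) := by
        rw [← ENNReal.ofReal_mul (by positivity : (0:ℝ) ≤ R ^ 3),
          ← ENNReal.ofReal_mul hB,
          ← ENNReal.ofReal_mul (mul_nonneg hB (by positivity))]
      have l2 : ENNReal.ofReal (4 * π / 3) * (ENNReal.ofReal ((R + 3) ^ 3)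
          * ENNReal.ofReal (4 * π / 3))
          = ENNReal.ofReal ((4 * π / 3) * ((R + 3) ^ 3 * (4 * π / 3))) := by
        rw [← ENNReal.ofReal_mul (pow_nonneg (by linarith) 3),
          ← ENNReal.ofReal_mul (by positivity)]
      rw [l1, l2]
      congr 1
      have hRne : R ≠ 0 := hR0.ne'
      field_simp [hBdef]
      rw [hBdef]
      field_simp
    have hNle : N ≤ ENNReal.ofReal B * D := by
      rw [← ENNReal.mul_le_mul_iff_left (c := ENNReal.ofReal v)
        (ENNReal.ofReal_pos.mpr hv).ne' ENNReal.ofReal_ne_top, hveq]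
      exact key
    have hD0 : D ≠ 0 := by
      rw [hDdef]
      exact (measure_ball_pos volume 0 hR0).ne'
    have hDt : D ≠ ⊤ := by
      rw [hDdef]
      exact measure_ball_lt_top.ne
    rw [ENNReal.div_le_iff_le_mul (Or.inl hD0) (Or.inl hDt)]
    exact hNle
  -- pass to the limit
  have hev : (fun R : ℝ =>
      volume ((⋃ c ∈ C, ball c 1) ∩ ball (0 : EuclideanSpace ℝ (Fin 3)) R) / volume (ball (0 : EuclideanSpace ℝ (Fin 3)) R))
      ≤ᶠ[atTop] fun R : ℝ => ENNReal.ofReal ((4 * π / 3) / v * ((R + 3) / R) ^ 3) :=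
    eventually_atTop.2 ⟨1, hbound⟩
  have htend : Tendsto (fun R : ℝ => ENNReal.ofReal ((4 * π / 3) / v * ((R + 3) / R) ^ 3))
      atTop (nhds (ENNReal.ofReal ((4 * π / 3) / v))) := by
    apply ENNReal.tendsto_ofReal
    have h1 : Tendsto (fun R : ℝ => (R + 3) / R) atTop (nhds 1) := by
      have h2 : Tendsto (fun R : ℝ => 1 + 3 / R) atTop (nhds (1 + 0)) :=
        tendsto_const_nhds.add (Tendsto.div_atTop tendsto_const_nhds tendsto_id)
      rw [add_zero] at h2
      refine h2.congr' ?_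
      filter_upwards [eventually_gt_atTop 0] with R hR
      field_simp
    have := (h1.pow 3).const_mul ((4 * π / 3) / v)
    simpa using this
  calc limsup (fun R : ℝ =>
        volume ((⋃ c ∈ C, ball c 1) ∩ ball (0 : EuclideanSpace ℝ (Fin 3)) R) / volume (ball (0 : EuclideanSpace ℝ (Fin 3)) R)) atTop
      ≤ limsup (fun R : ℝ => ENNReal.ofReal ((4 * π / 3) / v * ((R + 3) / R) ^ 3)) atTop :=
        limsup_le_limsup hev
    _ = ENNReal.ofReal ((4 * π / 3) / v) := htend.limsup_eq
end
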